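/- arXiv:1610.09296 — 4 statements merged into one kernel-verified Lean document; each statement's English description precedes it below -/
import Mathlib

section
/- Let Z be a measurable space with σ-finite measure λ, and let T : Z → Z be a Markov kernel admitting a measurable, everywhere strictly positive density t : Z × Z → ℝ≥0∞ with respect to λ, i.e. T(z)(A) = ∫_A t(z, z') dλ(z') for all z and measurable A. Then for every n ≥ 1, every z ∈ Z, and every measurable set A with λ(A) > 0, the n-step kernel satisfies Tⁿ(z)(A) > 0, where Tⁿ denotes the n-fold composition of T with itself. -/
/-!
Since the density is everywhere positive, one step of `T` already charges every set of positive
`λ`-measure from every state. Writing `Tⁿ⁺¹ = T ∘ₖ Tⁿ`, the mass `Tⁿ⁺¹ z A` is the integral of the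
everywhere-positive function `y ↦ T y A` against the probability measure `Tⁿ z`, hence positive.
-/

open MeasureTheory ProbabilityTheory
open scoped ENNReal

/-- The `n`-fold self-composition of a kernel (`kernelIter T n = T ∘ₖ ⋯ ∘ₖ T`,
`n` times). -/
noncomputable def kernelIter {Z : Type*} [MeasurableSpace Z]
    (T : Kernel Z Z) : ℕ → Kernel Z Z
  | 0 => Kernel.id
  | n + 1 => T ∘ₖ kernelIter T n

theorem setLIntegral_pos_of_pos {α : Type*} [MeasurableSpace α] {μ : Measure α}
    {f : α → ℝ≥0∞} (hf : Measurable f) {s : Set α} (hpos : ∀ x ∈ s, 0 < f x)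
    (hs : 0 < μ s) : 0 < ∫⁻ x in s, f x ∂μ := by
  have hsupp : Function.support f ∩ s = s :=
    Set.inter_eq_right.mpr fun x hx => (hpos x hx).ne'
  rwa [setLIntegral_pos_iff hf, hsupp]

theorem ProbabilityTheory.Kernel.comp_apply_pos {α β γ : Type*} [MeasurableSpace α]
    [MeasurableSpace β] [MeasurableSpace γ] {η : Kernel β γ} {κ : Kernel α β} {a : α}
    {s : Set γ} (hs : MeasurableSet s) (hη : ∀ b, 0 < η b s) (hκa : κ a ≠ 0) :
    0 < (η ∘ₖ κ) a s := by
  have hsupp : Function.support (fun b => η b s) = Set.univ :=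
    Set.eq_univ_of_forall fun b => (hη b).ne'
  rw [Kernel.comp_apply' _ _ _ hs, lintegral_pos_iff_support (η.measurable_coe hs), hsupp,
    pos_iff_ne_zero, Measure.measure_univ_ne_zero]
  exact hκa

instance isMarkovKernel_kernelIter {Z : Type*} [MeasurableSpace Z] (T : Kernel Z Z)
    [IsMarkovKernel T] (n : ℕ) : IsMarkovKernel (kernelIter T n) := by
  induction n with
  | zero => rw [kernelIter]; infer_instance
  | succ n ih => rw [kernelIter]; infer_instance

theorem nstep_kernel_pos_general
    {Z : Type*} [MeasurableSpace Z] (lambda : Measure Z)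
    (T : Kernel Z Z) [IsMarkovKernel T]
    (t : Z × Z → ℝ≥0∞) (ht : Measurable t) (htpos : ∀ z z', 0 < t (z, z'))
    (hT : ∀ z (A : Set Z), MeasurableSet A → T z A = ∫⁻ z' in A, t (z, z') ∂lambda) :
    ∀ n : ℕ, 1 ≤ n → ∀ z (A : Set Z), MeasurableSet A → 0 < lambda A →
      0 < (kernelIter T n) z A := by
  intro n hn z A hA hlA
  have hstep : ∀ y, 0 < T y A := fun y => by
    rw [hT y A hA]
    exact setLIntegral_pos_of_pos (ht.comp measurable_prodMk_left) (fun z' _ => htpos y z') hlA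
  obtain ⟨m, rfl⟩ := Nat.exists_eq_add_of_le' hn
  exact Kernel.comp_apply_pos hA hstep (IsProbabilityMeasure.ne_zero _)

/-- Lemma 2 (ergodicity): if a Markov kernel `T` has an everywhere strictly
positive density `t` with respect to a σ-finite reference measure `λ`, then for
every `n ≥ 1`, every state `z` and every set `A` of positive reference measure,
the `n`-step kernel satisfies `Tⁿ(z)(A) > 0`. -/
theorem nstep_kernel_pos
    {Z : Type*} [MeasurableSpace Z] (lambda : Measure Z) [SigmaFinite lambda]
    (T : Kernel Z Z) [IsMarkovKernel T]
    (t : Z × Z → ℝ≥0∞) (ht : Measurable t) (htpos : ∀ z z', 0 < t (z, z'))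
    (hT : ∀ z (A : Set Z), MeasurableSet A → T z A = ∫⁻ z' in A, t (z, z') ∂lambda) :
    ∀ n : ℕ, 1 ≤ n → ∀ z (A : Set Z), MeasurableSet A → 0 < lambda A →
      0 < (kernelIter T n) z A :=
  nstep_kernel_pos_general lambda T t ht htpos hT
end

section
/- Let Z be a measurable space and T : Z → Z a Markov kernel satisfying a Doeblin minorization condition: there exist ε ∈ (0, 1] and a probability measure ρ on Z such that T(z)(A) ≥ ε · ρ(A) for every z ∈ Z and measurable A. Then there exists a unique probability measure π on Z that is invariant for T, i.e. π.bind T = π. -/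
/-!
Doeblin's condition splits one step of the chain as `T ∘ₘ μ = (ε μ(Z)) • ρ + R μ`, where the
residual `R` is additive and shrinks total mass by the factor `1 - ε`. Iterating the split on an
invariant probability measure `π` gives `π = ∑_{k<n} Rᵏ (ε • ρ) + Rⁿ π`, so `π` dominates
`π₀ = ∑_k Rᵏ (ε • ρ)`. Summing the geometric series shows that `π₀` is itself an invariant
probability measure, and a probability measure dominating another one equals it.
-/

open MeasureTheory ProbabilityTheory Set
open scoped ENNReal

namespace Doeblin

variable {Z : Type*} [MeasurableSpace Z]

noncomputable def residual (T : Kernel Z Z) (ε : ℝ≥0∞) (ρ : Measure Z) (μ : Measure Z) :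
    Measure Z :=
  T ∘ₘ μ - (ε * μ univ) • ρ

/-- The regeneration representation of the invariant measure: at every step the chain restarts
from `ρ` with probability `ε`. -/
noncomputable def regenerationMeasure (T : Kernel Z Z) (ε : ℝ≥0∞) (ρ : Measure Z) : Measure Z :=
  Measure.sum fun k => (residual T ε ρ)^[k] (ε • ρ)

variable {T : Kernel Z Z} {ε : ℝ≥0∞} {ρ : Measure Z}

instance [IsFiniteKernel T] (μ : Measure Z) [IsFiniteMeasure μ] :
    IsFiniteMeasure (residual T ε ρ μ) :=
  Measure.isFiniteMeasure_sub

instance [IsFiniteKernel T] (μ : Measure Z) [IsFiniteMeasure μ] (n : ℕ) :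
    IsFiniteMeasure ((residual T ε ρ)^[n] μ) := by
  induction n with
  | zero => assumption
  | succ n ih => rw [Function.iterate_succ_apply']; infer_instance

lemma smul_le_comp (hT : ∀ z, ε • ρ ≤ T z) (μ : Measure Z) : (ε * μ univ) • ρ ≤ T ∘ₘ μ := by
  refine Measure.le_iff.2 fun A hA => ?_
  rw [Measure.smul_apply, smul_eq_mul, Measure.bind_apply hA T.aemeasurable]
  calc ε * μ univ * ρ A = ∫⁻ _, ε * ρ A ∂μ := by rw [lintegral_const]; ring
    _ ≤ ∫⁻ z, T z A ∂μ := lintegral_mono fun z => hT z A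

section FiniteReference

variable [IsFiniteMeasure ρ]

lemma comp_eq_smul_add_residual (hT : ∀ z, ε • ρ ≤ T z) (hε : ε ≠ ∞) (μ : Measure Z)
    [IsFiniteMeasure μ] : T ∘ₘ μ = (ε * μ univ) • ρ + residual T ε ρ μ := by
  have := ρ.smul_finite (ENNReal.mul_ne_top hε (measure_ne_top μ univ))
  rw [add_comm]
  exact (Measure.sub_add_cancel_of_le (smul_le_comp hT μ)).symm

lemma residual_add (hT : ∀ z, ε • ρ ≤ T z) (hε : ε ≠ ∞) (μ ν : Measure Z) [IsFiniteMeasure μ]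
    [IsFiniteMeasure ν] : residual T ε ρ (μ + ν) = residual T ε ρ μ + residual T ε ρ ν := by
  have := ρ.smul_finite (ENNReal.mul_ne_top hε (measure_ne_top (μ + ν) univ))
  have h : (ε * (μ + ν) univ) • ρ + residual T ε ρ (μ + ν)
      = (ε * (μ + ν) univ) • ρ + (residual T ε ρ μ + residual T ε ρ ν) := by
    rw [← comp_eq_smul_add_residual hT hε, Measure.comp_add, comp_eq_smul_add_residual hT hε μ,
      comp_eq_smul_add_residual hT hε ν, Measure.add_apply, mul_add, add_smul]
    abel
  exact le_antisymm (Measure.le_of_add_le_add_left h.le) (Measure.le_of_add_le_add_left h.ge)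

lemma iterate_residual_add [IsFiniteKernel T] (hT : ∀ z, ε • ρ ≤ T z) (hε : ε ≠ ∞) (n : ℕ)
    (μ ν : Measure Z) [IsFiniteMeasure μ] [IsFiniteMeasure ν] :
    (residual T ε ρ)^[n] (μ + ν) = (residual T ε ρ)^[n] μ + (residual T ε ρ)^[n] ν := by
  induction n generalizing μ ν with
  | zero => rfl
  | succ n ih => simp only [Function.iterate_succ_apply, residual_add hT hε, ih]

end FiniteReference

variable [IsMarkovKernel T] [IsProbabilityMeasure ρ]

lemma residual_apply_univ (hT : ∀ z, ε • ρ ≤ T z) (hε : ε ≠ ∞) (μ : Measure Z)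
    [IsFiniteMeasure μ] : residual T ε ρ μ univ = (1 - ε) * μ univ := by
  have := ρ.smul_finite (ENNReal.mul_ne_top hε (measure_ne_top μ univ))
  rw [residual, Measure.sub_apply .univ (smul_le_comp hT μ), Measure.comp_apply_univ,
    Measure.smul_apply, measure_univ (μ := ρ), smul_eq_mul, mul_one,
    ENNReal.sub_mul fun _ _ => measure_ne_top μ univ, one_mul]

lemma iterate_residual_apply_univ (hT : ∀ z, ε • ρ ≤ T z) (hε : ε ≠ ∞) (μ : Measure Z)
    [IsFiniteMeasure μ] (n : ℕ) :
    (residual T ε ρ)^[n] μ univ = (1 - ε) ^ n * μ univ := by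
  induction n with
  | zero => simp
  | succ n ih => rw [Function.iterate_succ_apply', residual_apply_univ hT hε, ih, pow_succ',
      mul_assoc]

lemma eq_sum_range_add_iterate_residual (hT : ∀ z, ε • ρ ≤ T z) (hε : ε ≠ ∞) (π : Measure Z)
    [IsProbabilityMeasure π] (hπ : T ∘ₘ π = π) (n : ℕ) :
    π = ∑ k ∈ Finset.range n, (residual T ε ρ)^[k] (ε • ρ) + (residual T ε ρ)^[n] π := by
  have := ρ.smul_finite hε
  have hsplit : π = ε • ρ + residual T ε ρ π := by
    conv_lhs => rw [← hπ, comp_eq_smul_add_residual hT hε, measure_univ, mul_one]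
  induction n with
  | zero => simp
  | succ n ih =>
    conv_lhs => rw [ih]
    conv_lhs => rw [hsplit]
    rw [iterate_residual_add hT hε, Finset.sum_range_succ, add_assoc,
      ← Function.iterate_succ_apply (residual T ε ρ)]

lemma regenerationMeasure_le (hT : ∀ z, ε • ρ ≤ T z) (hε : ε ≠ ∞) (π : Measure Z)
    [IsProbabilityMeasure π] (hπ : T ∘ₘ π = π) : regenerationMeasure T ε ρ ≤ π := by
  refine Measure.le_iff.2 fun A hA => ?_
  rw [regenerationMeasure, Measure.sum_apply _ hA]
  refine ENNReal.tsum_le_of_sum_range_le fun n => ?_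
  calc ∑ k ∈ Finset.range n, (residual T ε ρ)^[k] (ε • ρ) A
      ≤ (∑ k ∈ Finset.range n, (residual T ε ρ)^[k] (ε • ρ)) A + (residual T ε ρ)^[n] π A := by
        rw [Measure.finsetSum_apply]; exact le_self_add
    _ = π A := by
        rw [← Measure.add_apply, ← eq_sum_range_add_iterate_residual hT hε π hπ n]

lemma regenerationMeasure_apply_univ (hT : ∀ z, ε • ρ ≤ T z) (hε0 : 0 < ε) (hε1 : ε ≤ 1) :
    regenerationMeasure T ε ρ univ = 1 := by
  have hε : ε ≠ ∞ := ne_top_of_le_ne_top ENNReal.one_ne_top hε1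
  have := ρ.smul_finite hε
  simp_rw [regenerationMeasure, Measure.sum_apply _ .univ, iterate_residual_apply_univ hT hε,
    Measure.smul_apply, measure_univ, smul_eq_mul, mul_one]
  rw [ENNReal.tsum_mul_right, ENNReal.tsum_geometric,
    ENNReal.sub_sub_cancel ENNReal.one_ne_top hε1, ENNReal.inv_mul_cancel hε0.ne' hε]

lemma comp_regenerationMeasure (hT : ∀ z, ε • ρ ≤ T z) (hε0 : 0 < ε) (hε1 : ε ≤ 1) :
    T ∘ₘ regenerationMeasure T ε ρ = regenerationMeasure T ε ρ := by
  have hε : ε ≠ ∞ := ne_top_of_le_ne_top ENNReal.one_ne_top hε1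
  have := ρ.smul_finite hε
  ext A hA
  rw [regenerationMeasure, Measure.bind_sum _ _ T.aemeasurable, Measure.sum_apply _ hA,
    Measure.sum_apply _ hA]
  simp_rw [comp_eq_smul_add_residual hT hε, Measure.add_apply, Measure.smul_apply, smul_eq_mul,
    ← Function.iterate_succ_apply' (residual T ε ρ)]
  rw [ENNReal.tsum_add, ENNReal.tsum_mul_right, ENNReal.tsum_mul_left,
    ← Measure.sum_apply _ .univ, ← regenerationMeasure, regenerationMeasure_apply_univ hT hε0 hε1,
    mul_one]
  conv_rhs => rw [tsum_eq_zero_add' ENNReal.summable, Function.iterate_zero_apply,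
    Measure.smul_apply, smul_eq_mul]

end Doeblin

open Doeblin in
/-- Existence and uniqueness part of Theorem 1: a Markov kernel satisfying a
Doeblin minorization condition `T(z)(A) ≥ ε · ρ(A)` has a unique invariant
probability measure. -/
theorem doeblin_exists_unique_invariant
    {Z : Type*} [MeasurableSpace Z] (T : Kernel Z Z) [IsMarkovKernel T]
    (ε : ℝ≥0∞) (hε0 : 0 < ε) (hε1 : ε ≤ 1)
    (ρ : Measure Z) [IsProbabilityMeasure ρ]
    (hdoeblin : ∀ z (A : Set Z), MeasurableSet A → ε * ρ A ≤ T z A) :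
    ∃! π : Measure Z, IsProbabilityMeasure π ∧ π.bind T = π := by
  have hT : ∀ z, ε • ρ ≤ T z := fun z => Measure.le_iff.2 (hdoeblin z)
  have hε : ε ≠ ∞ := ne_top_of_le_ne_top ENNReal.one_ne_top hε1
  have hprob : IsProbabilityMeasure (regenerationMeasure T ε ρ) :=
    ⟨regenerationMeasure_apply_univ hT hε0 hε1⟩
  refine ⟨regenerationMeasure T ε ρ, ⟨hprob, comp_regenerationMeasure hT hε0 hε1⟩, ?_⟩
  rintro π ⟨hπ, hinv⟩
  exact (Measure.eq_of_le_of_isProbabilityMeasure (regenerationMeasure_le hT hε π hinv)).symm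
end

section
/- Let Z be a measurable space and T : Z → Z a Markov kernel satisfying a Doeblin minorization condition with constant ε ∈ (0, 1] and probability measure ρ: T(z)(A) ≥ ε · ρ(A) for all z and measurable A. Let π be a T-invariant probability measure (π.bind T = π). Then for every probability measure μ₀ on Z and every n ≥ 0, ‖μ₀.bind Tⁿ − π‖_TV ≤ (1 − ε)ⁿ · ‖μ₀ − π‖_TV; in particular the distribution of the chain started from any initial distribution μ₀ converges to π in total variation as n → ∞. -/
open MeasureTheory ProbabilityTheory Filter
open scoped ENNReal Topology

/-- Total variation distance between two measures:
`‖μ − ν‖_TV = sup { |μ(A) − ν(A)| : A measurable }`. -/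
noncomputable def tvDist {Z : Type*} [MeasurableSpace Z] (μ ν : Measure Z) : ℝ≥0∞ :=
  ⨆ (A : Set Z) (_ : MeasurableSet A), max (μ A - ν A) (ν A - μ A)

/-! A Doeblin minorization `ε • ρ ≤ T z` splits every transition law as
`T z = (T z - ε • ρ) + ε • ρ`. The common part `ε • ρ` does not depend on the starting point, so it
cancels when two initial laws are pushed through `T`; only the residual part, of mass `1 - ε`, sees
the difference between them. Hence one step of the chain contracts the total variation distance by
the factor `1 - ε`, iterating gives the geometric rate, and an invariant `π` is fixed by every
step. -/

section TotalVariation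

variable {Z : Type*} [MeasurableSpace Z]

lemma tvDist_comm (μ ν : Measure Z) : tvDist μ ν = tvDist ν μ :=
  iSup_congr fun _ => iSup_congr fun _ => max_comm _ _

lemma tvDist_le_of_forall {μ ν : Measure Z} {c : ℝ≥0∞}
    (h : ∀ A, MeasurableSet A → μ A ≤ ν A + c ∧ ν A ≤ μ A + c) : tvDist μ ν ≤ c :=
  iSup₂_le fun A hA => max_le (tsub_le_iff_left.2 (h A hA).1) (tsub_le_iff_left.2 (h A hA).2)

lemma sub_le_tvDist (μ ν : Measure Z) {A : Set Z} (hA : MeasurableSet A) :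
    μ A - ν A ≤ tvDist μ ν :=
  le_iSup₂_of_le A hA (le_max_left _ _)

lemma tvDist_le_one (μ ν : Measure Z) [IsZeroOrProbabilityMeasure μ]
    [IsZeroOrProbabilityMeasure ν] : tvDist μ ν ≤ 1 :=
  iSup₂_le fun _ _ => max_le (tsub_le_self.trans prob_le_one) (tsub_le_self.trans prob_le_one)

lemma lintegral_le_lintegral_add_of_le {μ ν : Measure Z} [IsFiniteMeasure ν] (hνμ : ν ≤ μ)
    {g : Z → ℝ≥0∞} {L : ℝ≥0∞} (hg : ∀ z, g z ≤ L) :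
    ∫⁻ z, g z ∂μ ≤ ∫⁻ z, g z ∂ν + L * (μ Set.univ - ν Set.univ) :=
  calc ∫⁻ z, g z ∂μ = ∫⁻ z, g z ∂(μ - ν) + ∫⁻ z, g z ∂ν := by
        rw [← lintegral_add_measure, Measure.sub_add_cancel_of_le hνμ]
    _ ≤ L * (μ - ν) Set.univ + ∫⁻ z, g z ∂ν := by
        gcongr
        exact (lintegral_mono hg).trans_eq (lintegral_const L)
    _ = ∫⁻ z, g z ∂ν + L * (μ Set.univ - ν Set.univ) := by
        rw [Measure.sub_apply MeasurableSet.univ hνμ, add_comm]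

lemma lintegral_le_lintegral_add_mul_tvDist (μ ν : Measure Z) [IsFiniteMeasure μ]
    [IsFiniteMeasure ν] {g : Z → ℝ≥0∞} {L : ℝ≥0∞} (hg : ∀ z, g z ≤ L) :
    ∫⁻ z, g z ∂μ ≤ ∫⁻ z, g z ∂ν + L * tvDist μ ν := by
  obtain ⟨S, hS, hνμ, hμν⟩ := hahn_decomposition μ ν
  have hle_on_S : ν.restrict S ≤ μ.restrict S := Measure.le_iff.2 fun t ht => by
    simpa only [Measure.restrict_apply ht] using hνμ _ (ht.inter hS) Set.inter_subset_right
  have hle_on_Sc : μ.restrict Sᶜ ≤ ν.restrict Sᶜ := Measure.le_iff.2 fun t ht => by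
    simpa only [Measure.restrict_apply ht] using hμν _ (ht.inter hS.compl) Set.inter_subset_right
  calc ∫⁻ z, g z ∂μ = ∫⁻ z, g z ∂(μ.restrict S) + ∫⁻ z, g z ∂(μ.restrict Sᶜ) := by
        rw [← lintegral_add_measure, Measure.restrict_add_restrict_compl hS]
    _ ≤ (∫⁻ z, g z ∂(ν.restrict S) + L * (μ S - ν S)) + ∫⁻ z, g z ∂(ν.restrict Sᶜ) := by
        refine add_le_add ?_ (lintegral_mono' hle_on_Sc le_rfl)
        simpa only [Measure.restrict_apply_univ] using lintegral_le_lintegral_add_of_le hle_on_S hg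
    _ ≤ ∫⁻ z, g z ∂ν + L * tvDist μ ν := by
        rw [add_right_comm, ← lintegral_add_measure, Measure.restrict_add_restrict_compl hS]
        exact add_le_add le_rfl (mul_le_mul_right (sub_le_tvDist μ ν hS) L)

end TotalVariation

section Minorization

variable {X Y : Type*} [MeasurableSpace X] [MeasurableSpace Y] {κ : Kernel X Y}
  [IsMarkovKernel κ] {η : Measure Y}

lemma measure_sub_apply_le_one_sub {m : Measure Y} [IsProbabilityMeasure m] (hηm : η ≤ m)
    (A : Set Y) : (m - η) A ≤ 1 - η Set.univ := by
  have : IsFiniteMeasure η := isFiniteMeasure_of_le m hηm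
  calc (m - η) A ≤ (m - η) Set.univ := measure_mono (Set.subset_univ A)
    _ = 1 - η Set.univ := by rw [Measure.sub_apply MeasurableSet.univ hηm, measure_univ]

lemma bind_apply_eq_lintegral_sub_add (hη : ∀ x, η ≤ κ x) (μ : Measure X)
    [IsProbabilityMeasure μ] {A : Set Y} (hA : MeasurableSet A) :
    μ.bind κ A = ∫⁻ x, (κ x - η) A ∂μ + η A := by
  have hsplit : ∀ x, κ x A = (κ x - η) A + η A := fun x => by
    have : IsFiniteMeasure η := isFiniteMeasure_of_le (κ x) (hη x)
    rw [← Measure.add_apply, Measure.sub_add_cancel_of_le (hη x)]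
  rw [Measure.bind_apply hA κ.aemeasurable, lintegral_congr hsplit,
    lintegral_add_right _ measurable_const, lintegral_const, measure_univ, mul_one]

lemma bind_apply_le_bind_apply_add (hη : ∀ x, η ≤ κ x) (μ ν : Measure X)
    [IsProbabilityMeasure μ] [IsProbabilityMeasure ν] {A : Set Y} (hA : MeasurableSet A) :
    μ.bind κ A ≤ ν.bind κ A + (1 - η Set.univ) * tvDist μ ν := by
  rw [bind_apply_eq_lintegral_sub_add hη μ hA, bind_apply_eq_lintegral_sub_add hη ν hA,
    add_right_comm]
  gcongr
  exact lintegral_le_lintegral_add_mul_tvDist μ ν fun x => measure_sub_apply_le_one_sub (hη x) A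

theorem tvDist_bind_le_of_minorization (hη : ∀ x, η ≤ κ x) (μ ν : Measure X)
    [IsProbabilityMeasure μ] [IsProbabilityMeasure ν] :
    tvDist (μ.bind κ) (ν.bind κ) ≤ (1 - η Set.univ) * tvDist μ ν :=
  tvDist_le_of_forall fun _ hA => ⟨bind_apply_le_bind_apply_add hη μ ν hA,
    tvDist_comm μ ν ▸ bind_apply_le_bind_apply_add hη ν μ hA⟩

end Minorization

section Iteration

variable {Z : Type*} [MeasurableSpace Z] {T : Kernel Z Z}

instance [IsMarkovKernel T] (n : ℕ) : IsMarkovKernel (kernelIter T n) := by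
  induction n with
  | zero => exact inferInstanceAs (IsMarkovKernel Kernel.id)
  | succ n _ => exact inferInstanceAs (IsMarkovKernel (T ∘ₖ kernelIter T n))

lemma bind_kernelIter_zero (μ : Measure Z) : μ.bind (kernelIter T 0) = μ :=
  Measure.id_comp

lemma bind_kernelIter_succ (μ : Measure Z) (n : ℕ) :
    μ.bind (kernelIter T (n + 1)) = (μ.bind (kernelIter T n)).bind T :=
  Measure.comp_assoc.symm

lemma bind_kernelIter_of_bind_eq {π : Measure Z} (hπ : π.bind T = π) (n : ℕ) :
    π.bind (kernelIter T n) = π := by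
  induction n with
  | zero => exact bind_kernelIter_zero π
  | succ n ih => rw [bind_kernelIter_succ, ih, hπ]

lemma tvDist_bind_kernelIter_le [IsMarkovKernel T] {η : Measure Z} (hη : ∀ z, η ≤ T z)
    (μ ν : Measure Z) [IsProbabilityMeasure μ] [IsProbabilityMeasure ν] (n : ℕ) :
    tvDist (μ.bind (kernelIter T n)) (ν.bind (kernelIter T n))
      ≤ (1 - η Set.univ) ^ n * tvDist μ ν := by
  induction n with
  | zero => rw [bind_kernelIter_zero, bind_kernelIter_zero, pow_zero, one_mul]
  | succ n ih =>
    rw [bind_kernelIter_succ, bind_kernelIter_succ, pow_succ', mul_assoc]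
    exact (tvDist_bind_le_of_minorization hη _ _).trans (mul_le_mul_right ih _)

end Iteration

theorem doeblin_geometric_convergence_general
    {Z : Type*} [MeasurableSpace Z] (T : Kernel Z Z) [IsMarkovKernel T]
    (ε : ℝ≥0∞) (hε0 : 0 < ε)
    (ρ : Measure Z) [IsProbabilityMeasure ρ]
    (hdoeblin : ∀ z (A : Set Z), MeasurableSet A → ε * ρ A ≤ T z A)
    (π : Measure Z) [IsProbabilityMeasure π] (hπ : π.bind T = π) :
    ∀ (μ₀ : Measure Z), IsProbabilityMeasure μ₀ →
      (∀ n : ℕ, tvDist (μ₀.bind (kernelIter T n)) π ≤ (1 - ε) ^ n * tvDist μ₀ π) ∧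
      Tendsto (fun n : ℕ => tvDist (μ₀.bind (kernelIter T n)) π) atTop (𝓝 0) := by
  intro μ₀ _
  have hminor : ∀ z, ε • ρ ≤ T z := fun z => Measure.le_iff.2 (hdoeblin z)
  have hbound (n : ℕ) : tvDist (μ₀.bind (kernelIter T n)) π ≤ (1 - ε) ^ n * tvDist μ₀ π := by
    simpa [bind_kernelIter_of_bind_eq hπ] using tvDist_bind_kernelIter_le hminor μ₀ π n
  refine ⟨hbound, tendsto_of_tendsto_of_tendsto_of_le_of_le tendsto_const_nhds ?_
    (fun _ => bot_le) hbound⟩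
  have hrate : 1 - ε < 1 := ENNReal.sub_lt_self ENNReal.one_ne_top one_ne_zero hε0.ne'
  simpa using ENNReal.Tendsto.mul_const (ENNReal.tendsto_pow_atTop_nhds_zero_of_lt_one hrate)
    (Or.inr ((tvDist_le_one μ₀ π).trans_lt ENNReal.one_lt_top).ne)

/-- Geometric-rate convergence of Theorem 1: under a Doeblin minorization
condition with constant `ε`, if `π` is `T`-invariant then for any initial
distribution `μ₀` and every `n`,
`‖μ₀ Tⁿ − π‖_TV ≤ (1 − ε)ⁿ ‖μ₀ − π‖_TV`; in particular the law of the chain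
converges to `π` in total variation. -/
theorem doeblin_geometric_convergence
    {Z : Type*} [MeasurableSpace Z] (T : Kernel Z Z) [IsMarkovKernel T]
    (ε : ℝ≥0∞) (hε0 : 0 < ε) (hε1 : ε ≤ 1)
    (ρ : Measure Z) [IsProbabilityMeasure ρ]
    (hdoeblin : ∀ z (A : Set Z), MeasurableSet A → ε * ρ A ≤ T z A)
    (π : Measure Z) [IsProbabilityMeasure π] (hπ : π.bind T = π) :
    ∀ (μ₀ : Measure Z), IsProbabilityMeasure μ₀ →
      (∀ n : ℕ, tvDist (μ₀.bind (kernelIter T n)) π ≤ (1 - ε) ^ n * tvDist μ₀ π) ∧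
      Tendsto (fun n : ℕ => tvDist (μ₀.bind (kernelIter T n)) π) atTop (𝓝 0) :=
  doeblin_geometric_convergence_general T ε hε0 ρ hdoeblin π hπ
end

section
/- Let X and Z be measurable spaces, κ : X → Z and η : Z → X Markov kernels (encoder and decoder), P_X a probability measure on X, and π = P_X.bind κ the learned latent distribution. Assume (i) π.bind η = P_X, and (ii) the decode–encode transition kernel T = κ ∘ η satisfies a Doeblin minorization condition: there exist ε ∈ (0, 1] and a probability measure ρ on Z with T(z)(A) ≥ ε · ρ(A) for all z and measurable A. Then for every probability measure μ₀ on Z (in particular for the prior P(Z)), the laws μ₀.bind Tⁿ of the Markov chain converge in total variation to π as n → ∞; i.e. the MCMC sampling process of iteratively decoding and encoding converges to the learned latent distribution from any initial distribution. -/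
/-!
The decode–encode kernel `T = κ ∘ₖ η` leaves `π` invariant: `π T = κ ∘ₘ (η ∘ₘ π) = κ ∘ₘ P_X = π`.
By the Doeblin condition, one step of the chain started from any measure of mass `c` is
`c ε ρ + r` with `r` of mass `c (1 - ε)`. Two chains of equal mass therefore share the part
`c ε ρ` after each step, and their difference after `n` steps is carried by residual measures
of mass `c (1 - ε)ⁿ`. Comparing an arbitrary start with the invariant `π` gives
`‖μ₀ Tⁿ − π‖_TV ≤ (1 - ε)ⁿ → 0`.
-/

open MeasureTheory ProbabilityTheory Filter
open scoped ENNReal Topology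

section KernelIter

variable {Z : Type*} [MeasurableSpace Z]

instance (T : Kernel Z Z) [IsMarkovKernel T] (n : ℕ) : IsMarkovKernel (kernelIter T n) := by
  induction n with
  | zero => rw [kernelIter]; infer_instance
  | succ n ih => rw [kernelIter]; infer_instance

lemma kernelIter_succ' (T : Kernel Z Z) (n : ℕ) :
    kernelIter T (n + 1) = kernelIter T n ∘ₖ T := by
  induction n with
  | zero => simp only [kernelIter, Kernel.comp_id, Kernel.id_comp]
  | succ n ih => exact (congrArg (T ∘ₖ ·) ih).trans (Kernel.comp_assoc _ _ _).symm

lemma kernelIter_comp_of_comp_eq_self {T : Kernel Z Z} {π : Measure Z} (h : T ∘ₘ π = π)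
    (n : ℕ) : kernelIter T n ∘ₘ π = π := by
  induction n with
  | zero => exact Measure.id_comp
  | succ n ih => rw [kernelIter_succ', ← Measure.comp_assoc, h, ih]

end KernelIter

section Doeblin

variable {Z : Type*} [MeasurableSpace Z] {T : Kernel Z Z} {ε : ℝ≥0∞} {ρ : Measure Z}

lemma tvDist_le_of_forall_le_add {μ ν : Measure Z} {r : ℝ≥0∞}
    (hμν : ∀ A, μ A ≤ ν A + r) (hνμ : ∀ A, ν A ≤ μ A + r) : tvDist μ ν ≤ r :=
  iSup₂_le fun A _ => max_le (tsub_le_iff_left.2 (hμν A)) (tsub_le_iff_left.2 (hνμ A))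

lemma smul_le_comp_of_minorization (hd : ∀ z A, MeasurableSet A → ε * ρ A ≤ T z A)
    (μ : Measure Z) : (μ Set.univ * ε) • ρ ≤ T ∘ₘ μ := by
  refine Measure.le_iff.2 fun A hA => ?_
  calc ((μ Set.univ * ε) • ρ) A = ∫⁻ _, ε * ρ A ∂μ := by
        rw [lintegral_const, Measure.smul_apply, smul_eq_mul]
        ring
    _ ≤ ∫⁻ z, T z A ∂μ := lintegral_mono fun z => hd z A hA
    _ = (T ∘ₘ μ) A := (Measure.bind_apply hA T.aemeasurable).symm

lemma exists_comp_eq_smul_add_of_minorization [IsMarkovKernel T] [IsProbabilityMeasure ρ]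
    (hε : ε ≤ 1) (hd : ∀ z A, MeasurableSet A → ε * ρ A ≤ T z A)
    (μ : Measure Z) [IsFiniteMeasure μ] :
    ∃ r : Measure Z, IsFiniteMeasure r ∧ r Set.univ = μ Set.univ * (1 - ε) ∧
      T ∘ₘ μ = (μ Set.univ * ε) • ρ + r := by
  have hle := smul_le_comp_of_minorization hd μ
  have hc : μ Set.univ ≠ ∞ := measure_ne_top μ _
  have : IsFiniteMeasure ((μ Set.univ * ε) • ρ) := ⟨by
    simpa using ENNReal.mul_lt_top hc.lt_top (hε.trans_lt ENNReal.one_lt_top)⟩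
  refine ⟨T ∘ₘ μ - (μ Set.univ * ε) • ρ, inferInstance, ?_, ?_⟩
  · rw [Measure.sub_apply .univ hle, Measure.comp_apply_univ, Measure.smul_apply,
      measure_univ (μ := ρ), smul_eq_mul, mul_one, ENNReal.mul_sub fun _ _ => hc, mul_one]
  · rw [add_comm, Measure.sub_add_cancel_of_le hle]

lemma comp_kernelIter_apply_le_of_minorization [IsMarkovKernel T] [IsProbabilityMeasure ρ]
    (hε : ε ≤ 1) (hd : ∀ z A, MeasurableSet A → ε * ρ A ≤ T z A) (n : ℕ) (μ ν : Measure Z)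
    [IsFiniteMeasure μ] [IsFiniteMeasure ν] (hμν : μ Set.univ = ν Set.univ) (A : Set Z) :
    (kernelIter T n ∘ₘ μ) A ≤ (kernelIter T n ∘ₘ ν) A + μ Set.univ * (1 - ε) ^ n := by
  induction n generalizing μ ν with
  | zero => simpa [kernelIter] using le_add_left (measure_mono (μ := μ) (Set.subset_univ A))
  | succ n ih =>
    obtain ⟨r, _, hr, hμ⟩ := exists_comp_eq_smul_add_of_minorization hε hd μ
    obtain ⟨s, _, hs, hν⟩ := exists_comp_eq_smul_add_of_minorization hε hd ν
    rw [← hμν] at hs hν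
    have hrs := ih r s (hr.trans hs.symm)
    rw [hr] at hrs
    simp only [kernelIter_succ', ← Measure.comp_assoc, hμ, hν, Measure.comp_add,
      Measure.comp_smul, Measure.add_apply, Measure.smul_apply, smul_eq_mul]
    calc _ ≤ μ Set.univ * ε * (kernelIter T n ∘ₘ ρ) A
            + ((kernelIter T n ∘ₘ s) A + μ Set.univ * (1 - ε) * (1 - ε) ^ n) := by gcongr
      _ = _ := by ring

lemma tvDist_comp_kernelIter_le_of_minorization [IsMarkovKernel T] [IsProbabilityMeasure ρ]
    (hε : ε ≤ 1) (hd : ∀ z A, MeasurableSet A → ε * ρ A ≤ T z A) (n : ℕ) (μ ν : Measure Z)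
    [IsProbabilityMeasure μ] [IsProbabilityMeasure ν] :
    tvDist (kernelIter T n ∘ₘ μ) (kernelIter T n ∘ₘ ν) ≤ (1 - ε) ^ n := by
  have hμν : μ Set.univ = ν Set.univ := by simp
  refine tvDist_le_of_forall_le_add (fun A => ?_) (fun A => ?_)
  · simpa using comp_kernelIter_apply_le_of_minorization hε hd n μ ν hμν A
  · simpa using comp_kernelIter_apply_le_of_minorization hε hd n ν μ hμν.symm A

theorem tendsto_tvDist_comp_kernelIter_of_minorization [IsMarkovKernel T]
    [IsProbabilityMeasure ρ] (hε0 : 0 < ε) (hε1 : ε ≤ 1)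
    (hd : ∀ z A, MeasurableSet A → ε * ρ A ≤ T z A) {π : Measure Z} [IsProbabilityMeasure π]
    (hπ : T ∘ₘ π = π) (μ : Measure Z) [IsProbabilityMeasure μ] :
    Tendsto (fun n => tvDist (kernelIter T n ∘ₘ μ) π) atTop (𝓝 0) := by
  have hbound (n : ℕ) : tvDist (kernelIter T n ∘ₘ μ) π ≤ (1 - ε) ^ n := by
    simpa only [kernelIter_comp_of_comp_eq_self hπ n] using
      tvDist_comp_kernelIter_le_of_minorization hε1 hd n μ π
  have hpow : Tendsto (fun n : ℕ => (1 - ε) ^ n) atTop (𝓝 0) :=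
    ENNReal.tendsto_pow_atTop_nhds_zero_of_lt_one (ENNReal.sub_lt_self ENNReal.one_ne_top
      one_ne_zero hε0.ne')
  exact tendsto_of_tendsto_of_tendsto_of_le_of_le tendsto_const_nhds hpow (fun _ => zero_le)
    hbound

end Doeblin

/-- Theorem 1 combined with Lemmas 2 and 3: if the decoder inverts the encoder
in distribution and the decode–encode transition kernel `T = κ ∘ₖ η` satisfies
a Doeblin minorization condition, then from any initial distribution `μ₀`
(in particular the prior) the laws `μ₀ Tⁿ` of the MCMC chain converge in total
variation to the learned latent distribution `π = P_X.bind κ`. -/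
theorem mcmc_converges_to_learned_latent
    {X Z : Type*} [MeasurableSpace X] [MeasurableSpace Z]
    (κ : Kernel X Z) (η : Kernel Z X) [IsMarkovKernel κ] [IsMarkovKernel η]
    (P_X : Measure X) [IsProbabilityMeasure P_X]
    (π : Measure Z) (hπ : π = P_X.bind κ)
    (hinv : π.bind η = P_X)
    (ε : ℝ≥0∞) (hε0 : 0 < ε) (hε1 : ε ≤ 1)
    (ρ : Measure Z) [IsProbabilityMeasure ρ]
    (hdoeblin : ∀ z (A : Set Z), MeasurableSet A → ε * ρ A ≤ (κ ∘ₖ η) z A) :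
    ∀ (μ₀ : Measure Z), IsProbabilityMeasure μ₀ →
      Tendsto (fun n : ℕ => tvDist (μ₀.bind (kernelIter (κ ∘ₖ η) n)) π) atTop (𝓝 0) := by
  intro μ₀ _
  have : IsProbabilityMeasure π := hπ ▸ inferInstance
  have hstationary : (κ ∘ₖ η) ∘ₘ π = π := by rw [← Measure.comp_assoc, hinv, hπ]
  exact tendsto_tvDist_comp_kernelIter_of_minorization hε0 hε1 hdoeblin hstationary μ₀
end
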